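/- arXiv:2301.06141 — 5 statements merged into one kernel-verified Lean document; each statement's English description precedes it below -/
import Mathlib

section
/- For all x, y, z, δ in [0,1]: max(x - δ, 0) ≤ (y →G min(z + δ, 1)) if and only if min((x - z)⁺/2, (y - z)⁺) ≤ δ, where →G is the Gödel implication. -/
/-! Both sides reduce to the same disjunction `y - z ≤ δ ∨ x - z ≤ 2δ`: on the left, `a ≤ b →G c`
(for `a ≤ 1`) holds exactly when `b ≤ c` or `a ≤ c`, and the bounds on the variables make the
truncations at `0` and `1` vacuous; on the right, a minimum of two quantities is at most `δ`
exactly when one of them is. -/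

noncomputable def godel (x y : ℝ) : ℝ := if x ≤ y then 1 else y

noncomputable def sigmaG (x y z : ℝ) : ℝ := min (max (x - z) 0 / 2) (max (y - z) 0)

theorem le_godel_iff {a b c : ℝ} (ha : a ≤ 1) : a ≤ godel b c ↔ b ≤ c ∨ a ≤ c := by
  unfold godel
  split_ifs with hbc
  · exact iff_of_true ha (Or.inl hbc)
  · simp only [hbc, false_or]

theorem sigmaG_le_iff {x y z δ : ℝ} (hδ : 0 ≤ δ) :
    sigmaG x y z ≤ δ ↔ x - z ≤ 2 * δ ∨ y - z ≤ δ := by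
  unfold sigmaG
  rw [min_le_iff, div_le_iff₀ two_pos, max_le_iff, max_le_iff, mul_comm δ]
  simp only [hδ, mul_nonneg zero_le_two hδ, and_true]

theorem stmt3 (x y z δ : ℝ) (hx : x ∈ Set.Icc (0:ℝ) 1) (hy : y ∈ Set.Icc (0:ℝ) 1)
    (hz : z ∈ Set.Icc (0:ℝ) 1) (hδ : δ ∈ Set.Icc (0:ℝ) 1) :
    max (x - δ) 0 ≤ godel y (min (z + δ) 1) ↔ sigmaG x y z ≤ δ := by
  have hy_le : y ≤ min (z + δ) 1 ↔ y - z ≤ δ := by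
    rw [le_min_iff, sub_le_iff_le_add']
    exact and_iff_left hy.2
  have hmax_le : max (x - δ) 0 ≤ min (z + δ) 1 ↔ x - z ≤ 2 * δ := by
    simp only [le_min_iff, max_le_iff]
    constructor
    · rintro ⟨⟨h, -⟩, -⟩
      linarith
    · intro h
      refine ⟨⟨by linarith, by linarith [hz.1, hδ.1]⟩, by linarith [hx.2, hδ.1], zero_le_one⟩
  rw [le_godel_iff (max_le (by linarith [hx.2, hδ.1]) zero_le_one), sigmaG_le_iff hδ.1,
    hy_le, hmax_le, or_comm]
end

section
/- Let A ∈ [0,1]^{n×m} and define F(c) = A ⊡ (Aᵗ ⊡_→ c). Then F is idempotent: F(F(c)) = F(c) for all c ∈ [0,1]^n. -/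
noncomputable def maxMin {n m : ℕ} [NeZero m] (A : Fin n → Fin m → ℝ) (x : Fin m → ℝ) :
    Fin n → ℝ :=
  fun i => Finset.univ.sup' Finset.univ_nonempty (fun j => min (A i j) (x j))

noncomputable def godelComp {n m : ℕ} [NeZero n] (A : Fin n → Fin m → ℝ) (c : Fin n → ℝ) :
    Fin m → ℝ :=
  fun j => Finset.univ.inf' Finset.univ_nonempty (fun i => godel (A i j) (c i))

noncomputable def Fmap {n m : ℕ} [NeZero n] [NeZero m] (A : Fin n → Fin m → ℝ)
    (c : Fin n → ℝ) : Fin n → ℝ :=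
  maxMin A (godelComp A c)

/-! `x ↦ A ⊡ x` and `c ↦ Aᵗ ⊡_→ c` form a Galois connection on vectors bounded by `1`, because
`min a x ≤ y ↔ x ≤ (a →G y)` for `x ≤ 1`. Hence `F c ≤ c` for every `c`, while
`x ≤ Aᵗ ⊡_→ (A ⊡ x)` gives `A ⊡ x ≤ F (A ⊡ x)`; taking `x = Aᵗ ⊡_→ c` yields `F (F c) = F c`. -/

lemma min_le_of_le_godel {a x y : ℝ} (h : x ≤ godel a y) : min a x ≤ y := by
  unfold godel at h
  split_ifs at h with hay
  · exact (min_le_left a x).trans hay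
  · exact (min_le_right a x).trans h

lemma le_godel_of_min_le {a x y : ℝ} (hx : x ≤ 1) (h : min a x ≤ y) : x ≤ godel a y := by
  unfold godel
  split_ifs with hay
  · exact hx
  · exact (min_le_iff.mp h).resolve_left hay

lemma godel_le_one_of_le_one (a : ℝ) {y : ℝ} (hy : y ≤ 1) : godel a y ≤ 1 := by
  unfold godel
  split_ifs <;> linarith

section

variable {n m : ℕ} (A : Fin n → Fin m → ℝ)

lemma maxMin_mono [NeZero m] {x y : Fin m → ℝ} (h : x ≤ y) : maxMin A x ≤ maxMin A y :=
  fun i => Finset.sup'_mono_fun fun j _ => min_le_min_left (A i j) (h j)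

lemma godelComp_le_one [NeZero n] {c : Fin n → ℝ} (hc : ∀ i, c i ≤ 1) : godelComp A c ≤ 1 :=
  fun _ => (Finset.inf'_le _ (Finset.mem_univ 0)).trans (godel_le_one_of_le_one _ (hc 0))

lemma maxMin_godelComp_le [NeZero n] [NeZero m] (c : Fin n → ℝ) :
    maxMin A (godelComp A c) ≤ c :=
  fun i => Finset.sup'_le _ _ fun j _ =>
    min_le_of_le_godel (Finset.inf'_le (fun i => godel (A i j) (c i)) (Finset.mem_univ i))

lemma le_godelComp_maxMin [NeZero n] [NeZero m] {x : Fin m → ℝ} (hx : x ≤ 1) :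
    x ≤ godelComp A (maxMin A x) :=
  fun j => Finset.le_inf' _ _ fun i _ =>
    le_godel_of_min_le (hx j) (Finset.le_sup' (fun j => min (A i j) (x j)) (Finset.mem_univ j))

end

theorem stmt8_general {n m : ℕ} [NeZero n] [NeZero m] (A : Fin n → Fin m → ℝ)
    (c : Fin n → ℝ) (hc : ∀ i, c i ∈ Set.Icc (0:ℝ) 1) :
    Fmap A (Fmap A c) = Fmap A c := by
  have hx : godelComp A c ≤ 1 := godelComp_le_one A fun i => (hc i).2
  exact le_antisymm (maxMin_godelComp_le A _) (maxMin_mono A (le_godelComp_maxMin A hx))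

theorem stmt8 {n m : ℕ} [NeZero n] [NeZero m] (A : Fin n → Fin m → ℝ)
    (hA : ∀ i j, A i j ∈ Set.Icc (0:ℝ) 1)
    (c : Fin n → ℝ) (hc : ∀ i, c i ∈ Set.Icc (0:ℝ) 1) :
    Fmap A (Fmap A c) = Fmap A c :=
  stmt8_general A c hc
end

section
/- Let A ∈ [0,1]^{n×m}, b ∈ [0,1]^n, and F(c) = A ⊡ (Aᵗ ⊡_→ c). For c ∈ [0,1]^n, the system A ⊡ x = c has a solution x ∈ [0,1]^m if and only if F(c) = c. -/
theorem godel_mem_Icc {x y : ℝ} (hy : y ∈ Set.Icc (0 : ℝ) 1) : godel x y ∈ Set.Icc (0 : ℝ) 1 := by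
  unfold godel
  split_ifs
  exacts [Set.right_mem_Icc.2 zero_le_one, hy]

theorem min_le_iff_le_godel {a x c : ℝ} (hx : x ≤ 1) : min a x ≤ c ↔ x ≤ godel a c := by
  unfold godel
  split_ifs with hac
  · exact iff_of_true ((min_le_left a x).trans hac) hx
  · rw [min_le_iff, or_iff_right hac]

theorem godelComp_mem_Icc {n m : ℕ} [NeZero n] (A : Fin n → Fin m → ℝ) {c : Fin n → ℝ}
    (hc : ∀ i, c i ∈ Set.Icc (0 : ℝ) 1) (j : Fin m) : godelComp A c j ∈ Set.Icc (0 : ℝ) 1 := by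
  obtain ⟨i, hi, hmin⟩ := Finset.exists_mem_eq_inf' Finset.univ_nonempty
    (fun i => godel (A i j) (c i))
  rw [godelComp, hmin]
  exact godel_mem_Icc (hc i)

theorem maxMin_mono_s9 {n m : ℕ} [NeZero m] (A : Fin n → Fin m → ℝ) : Monotone (maxMin A) :=
  fun _ _ hxy i => Finset.sup'_mono_fun fun j _ => min_le_min_left (A i j) (hxy j)

theorem maxMin_le_iff_le_godelComp {n m : ℕ} [NeZero n] [NeZero m] (A : Fin n → Fin m → ℝ)
    {x : Fin m → ℝ} (hx : ∀ j, x j ≤ 1) (c : Fin n → ℝ) :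
    maxMin A x ≤ c ↔ x ≤ godelComp A c := by
  simp only [Pi.le_def, maxMin, godelComp, Finset.sup'_le_iff, Finset.le_inf'_iff,
    Finset.mem_univ, true_implies, min_le_iff_le_godel (hx _)]
  exact forall_comm

theorem Fmap_le_self {n m : ℕ} [NeZero n] [NeZero m] (A : Fin n → Fin m → ℝ) {c : Fin n → ℝ}
    (hc : ∀ i, c i ∈ Set.Icc (0 : ℝ) 1) : Fmap A c ≤ c :=
  (maxMin_le_iff_le_godelComp A (fun j => (godelComp_mem_Icc A hc j).2) c).2 le_rfl

theorem stmt9_general {n m : ℕ} [NeZero n] [NeZero m] (A : Fin n → Fin m → ℝ)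
    (c : Fin n → ℝ) (hc : ∀ i, c i ∈ Set.Icc (0:ℝ) 1) :
    (∃ x : Fin m → ℝ, (∀ j, x j ∈ Set.Icc (0:ℝ) 1) ∧ maxMin A x = c) ↔ Fmap A c = c := by
  constructor
  · rintro ⟨x, hx, rfl⟩
    have hx_le : x ≤ godelComp A (maxMin A x) :=
      (maxMin_le_iff_le_godelComp A (fun j => (hx j).2) _).1 le_rfl
    exact le_antisymm (Fmap_le_self A hc) (maxMin_mono_s9 A hx_le)
  · intro hF
    exact ⟨godelComp A c, godelComp_mem_Icc A hc, hF⟩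

theorem stmt9 {n m : ℕ} [NeZero n] [NeZero m] (A : Fin n → Fin m → ℝ)
    (hA : ∀ i j, A i j ∈ Set.Icc (0:ℝ) 1)
    (c : Fin n → ℝ) (hc : ∀ i, c i ∈ Set.Icc (0:ℝ) 1) :
    (∃ x : Fin m → ℝ, (∀ j, x j ∈ Set.Icc (0:ℝ) 1) ∧ maxMin A x = c) ↔ Fmap A c = c :=
  stmt9_general A c hc
end

section
/- Let A ∈ [0,1]^{n×m}, b ∈ [0,1]^n. Define Δ = min{δ ∈ [0,1] : b̲(δ) ≤ F(b̄(δ))} where F(c) = A ⊡ (Aᵗ ⊡_→ c), b̲(δ)_i = (b_i - δ)⁺, b̄(δ)_i = min(b_i + δ, 1). Then Δ = max_{1≤i≤n} min_{1≤j≤m} max( (b_i - a_{ij})⁺, max_{1≤k≤n} σ_G(b_i, a_{kj}, b_k) ), where σ_G(x, y, z) = min((x - z)⁺/2, (y - z)⁺). -/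
noncomputable def chebNorm {n : ℕ} [NeZero n] (b c : Fin n → ℝ) : ℝ :=
  Finset.univ.sup' Finset.univ_nonempty (fun i => |b i - c i|)

lemma godel_nonneg {x y : ℝ} (hy : 0 ≤ y) : 0 ≤ godel x y := by
  unfold godel
  split_ifs
  exacts [zero_le_one, hy]

lemma sub_le_godel_min_add_iff {x y z δ : ℝ} (hx : x ≤ 1) (hy : y ≤ 1) (hδ : 0 ≤ δ) :
    x - δ ≤ godel y (min (z + δ) 1) ↔ sigmaG x y z ≤ δ := by
  unfold godel sigmaG
  split_ifs with h
  · have hyz : y - z ≤ δ := by linarith [min_le_left (z + δ) 1]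
    exact ⟨fun _ => (min_le_right _ _).trans (max_le hyz hδ), fun _ => by linarith⟩
  · -- since `y ≤ 1`, the residuum can only fail to be `1` because `z + δ < y`
    have hzy : z + δ < y := by
      rcases min_lt_iff.mp (not_le.mp h) with h' | h'
      · exact h'
      · linarith
    rw [min_eq_left (by linarith), min_le_iff, div_le_iff₀ two_pos, max_le_iff, max_le_iff]
    constructor
    · intro hxz
      exact Or.inl ⟨by linarith, by linarith⟩
    · rintro (⟨hxz, -⟩ | ⟨hyz, -⟩) <;> linarith

lemma le_maxMin_iff {n m : ℕ} [NeZero m] (A : Fin n → Fin m → ℝ) (x : Fin m → ℝ) (i : Fin n)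
    (t : ℝ) : t ≤ maxMin A x i ↔ ∃ j, t ≤ A i j ∧ t ≤ x j := by
  simp only [maxMin, Finset.le_sup'_iff, Finset.mem_univ, true_and, le_min_iff]

lemma le_godelComp_iff {n m : ℕ} [NeZero n] (A : Fin n → Fin m → ℝ) (c : Fin n → ℝ) (j : Fin m)
    (t : ℝ) : t ≤ godelComp A c j ↔ ∀ k, t ≤ godel (A k j) (c k) := by
  simp only [godelComp, Finset.le_inf'_iff, Finset.mem_univ, true_implies]

lemma Fmap_nonneg {n m : ℕ} [NeZero n] [NeZero m] {A : Fin n → Fin m → ℝ} {c : Fin n → ℝ}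
    (hA : ∀ i j, 0 ≤ A i j) (hc : ∀ k, 0 ≤ c k) (i : Fin n) : 0 ≤ Fmap A c i :=
  (le_maxMin_iff A _ i 0).2 ⟨0, hA i 0, (le_godelComp_iff A c 0 0).2 fun k => godel_nonneg (hc k)⟩

lemma Fmap_min_add_nonneg {n m : ℕ} [NeZero n] [NeZero m] {A : Fin n → Fin m → ℝ}
    {b : Fin n → ℝ} {δ : ℝ} (hA : ∀ i j, 0 ≤ A i j) (hb : ∀ k, 0 ≤ b k) (hδ : 0 ≤ δ)
    (i : Fin n) : 0 ≤ Fmap A (fun k => min (b k + δ) 1) i :=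
  Fmap_nonneg hA (fun k => le_min (add_nonneg (hb k) hδ) zero_le_one) i

lemma sub_le_Fmap_min_add_iff {n m : ℕ} [NeZero n] [NeZero m] {A : Fin n → Fin m → ℝ}
    {b : Fin n → ℝ} {δ : ℝ} (hA : ∀ i j, A i j ≤ 1) (hb : ∀ i, b i ≤ 1) (hδ : 0 ≤ δ)
    (i : Fin n) :
    b i - δ ≤ Fmap A (fun k => min (b k + δ) 1) i ↔
      ∃ j, max (max (b i - A i j) 0)
        (Finset.univ.sup' Finset.univ_nonempty (fun k => sigmaG (b i) (A k j) (b k))) ≤ δ := by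
  simp only [Fmap, le_maxMin_iff, le_godelComp_iff, sub_le_godel_min_add_iff (hb i) (hA _ _) hδ,
    max_le_iff, Finset.sup'_le_iff, Finset.mem_univ, true_implies, sub_le_comm, hδ, and_true]

lemma forall_max_sub_le_Fmap_min_add_iff {n m : ℕ} [NeZero n] [NeZero m]
    {A : Fin n → Fin m → ℝ} (hA : ∀ i j, A i j ∈ Set.Icc (0:ℝ) 1)
    {b : Fin n → ℝ} (hb : ∀ i, b i ∈ Set.Icc (0:ℝ) 1) {δ : ℝ} (hδ : 0 ≤ δ) :
    (∀ i, max (b i - δ) 0 ≤ Fmap A (fun k => min (b k + δ) 1) i) ↔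
      Finset.univ.sup' Finset.univ_nonempty (fun i =>
        Finset.univ.inf' Finset.univ_nonempty (fun j =>
          max (max (b i - A i j) 0)
            (Finset.univ.sup' Finset.univ_nonempty (fun k => sigmaG (b i) (A k j) (b k))))) ≤
        δ := by
  simp only [max_le_iff, Fmap_min_add_nonneg (fun i j => (hA i j).1) (fun k => (hb k).1) hδ,
    and_true, sub_le_Fmap_min_add_iff (fun i j => (hA i j).2) (fun i => (hb i).2) hδ,
    Finset.sup'_le_iff, Finset.inf'_le_iff, Finset.mem_univ, true_implies, true_and]

theorem stmt11 {n m : ℕ} [NeZero n] [NeZero m] (A : Fin n → Fin m → ℝ)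
    (hA : ∀ i j, A i j ∈ Set.Icc (0:ℝ) 1)
    (b : Fin n → ℝ) (hb : ∀ i, b i ∈ Set.Icc (0:ℝ) 1) :
    sInf {δ : ℝ | δ ∈ Set.Icc (0:ℝ) 1 ∧
        ∀ i, max (b i - δ) 0 ≤ Fmap A (fun k => min (b k + δ) 1) i} =
      Finset.univ.sup' Finset.univ_nonempty (fun i =>
        Finset.univ.inf' Finset.univ_nonempty (fun j =>
          max (max (b i - A i j) 0)
            (Finset.univ.sup' Finset.univ_nonempty (fun k => sigmaG (b i) (A k j) (b k))))) := by
  set Δ := Finset.univ.sup' Finset.univ_nonempty (fun i =>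
    Finset.univ.inf' Finset.univ_nonempty (fun j =>
      max (max (b i - A i j) 0)
        (Finset.univ.sup' Finset.univ_nonempty (fun k => sigmaG (b i) (A k j) (b k)))))
  have hΔ_nonneg : 0 ≤ Δ :=
    Finset.le_sup'_of_le _ (Finset.mem_univ 0)
      (Finset.le_inf' _ _ fun j _ => le_max_of_le_left (le_max_right _ _))
  have hΔ_le_one : Δ ≤ 1 :=
    (forall_max_sub_le_Fmap_min_add_iff hA hb zero_le_one).1 fun i =>
      have hF := Fmap_min_add_nonneg (fun i j => (hA i j).1) (fun k => (hb k).1) zero_le_one i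
      max_le ((sub_nonpos.2 (hb i).2).trans hF) hF
  have hfeasible : {δ : ℝ | δ ∈ Set.Icc (0:ℝ) 1 ∧
      ∀ i, max (b i - δ) 0 ≤ Fmap A (fun k => min (b k + δ) 1) i} = Set.Icc Δ 1 := by
    ext δ
    constructor
    · rintro ⟨hδ, hrows⟩
      exact ⟨(forall_max_sub_le_Fmap_min_add_iff hA hb hδ.1).1 hrows, hδ.2⟩
    · rintro ⟨hΔδ, hδ1⟩
      have hδ0 : 0 ≤ δ := hΔ_nonneg.trans hΔδ
      exact ⟨⟨hδ0, hδ1⟩, (forall_max_sub_le_Fmap_min_add_iff hA hb hδ0).2 hΔδ⟩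
  rw [hfeasible, csInf_Icc hΔ_le_one]
end

section
/- Let A ∈ [0,1]^{n×m}, b ∈ [0,1]^n, Δ ∈ [0,1]. For j = 1,…,m let H_j = {i : a_{ij} < b_i - Δ}, and for T ⊆ {1,…,m} let I_T = ∩_{j∈T} H_j and ξ_T = max_{i ∈ I_T} (b_i - Δ)⁺ (with max over ∅ equal to 0). For x ∈ [0,1]^m, the following are equivalent: (i) b̲(Δ) ≤ A ⊡ x componentwise; (ii) for every i there exists j with (b_i - Δ)⁺ ≤ a_{ij} and (b_i - Δ)⁺ ≤ x_j; (iii) for every subset T of {1,…,m}, ξ_T ≤ max_{j ∈ Tᶜ} x_j (with max over ∅ equal to 0). -/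
open scoped Classical

noncomputable def xiT {n m : ℕ} (A : Fin n → Fin m → ℝ) (b : Fin n → ℝ) (Δ : ℝ)
    (T : Finset (Fin m)) : ℝ :=
  if h : (Finset.univ.filter (fun i : Fin n => ∀ j ∈ T, A i j < b i - Δ)).Nonempty then
    (Finset.univ.filter (fun i : Fin n => ∀ j ∈ T, A i j < b i - Δ)).sup' h
      (fun i => max (b i - Δ) 0)
  else 0

noncomputable def stmtMaxOn {m : ℕ} (S : Finset (Fin m)) (x : Fin m → ℝ) : ℝ :=
  if h : S.Nonempty then S.sup' h x else 0

theorem Finset.le_univ_sup'_min_iff {ι α : Type*} [Fintype ι] [Nonempty ι] [LinearOrder α]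
    (a x : ι → α) (c : α) :
    c ≤ Finset.univ.sup' Finset.univ_nonempty (fun j => min (a j) (x j)) ↔
      ∃ j, c ≤ a j ∧ c ≤ x j := by
  simp only [Finset.le_sup'_iff, Finset.mem_univ, true_and, le_min_iff]

section MaxOn

variable {m : ℕ}

theorem le_stmtMaxOn {S : Finset (Fin m)} (x : Fin m → ℝ) {j : Fin m} (hj : j ∈ S) :
    x j ≤ stmtMaxOn S x := by
  rw [stmtMaxOn, dif_pos ⟨j, hj⟩]
  exact Finset.le_sup' x hj

theorem stmtMaxOn_nonneg (S : Finset (Fin m)) {x : Fin m → ℝ} (hx : ∀ j, 0 ≤ x j) :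
    0 ≤ stmtMaxOn S x := by
  unfold stmtMaxOn
  split_ifs with hS
  · obtain ⟨j, hj⟩ := hS
    exact (hx j).trans (Finset.le_sup' x hj)
  · exact le_rfl

theorem stmtMaxOn_lt {S : Finset (Fin m)} {x : Fin m → ℝ} {c : ℝ} (hc : 0 < c)
    (h : ∀ j ∈ S, x j < c) : stmtMaxOn S x < c := by
  unfold stmtMaxOn
  split_ifs with hS
  · exact (Finset.sup'_lt_iff hS).mpr h
  · exact hc

end MaxOn

section Xi

variable {n m : ℕ} (A : Fin n → Fin m → ℝ) (b : Fin n → ℝ) (Δ : ℝ)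

theorem le_xiT {T : Finset (Fin m)} {i : Fin n} (hi : ∀ j ∈ T, A i j < b i - Δ) :
    max (b i - Δ) 0 ≤ xiT A b Δ T := by
  have hmem : i ∈ Finset.univ.filter (fun i => ∀ j ∈ T, A i j < b i - Δ) := by
    simpa using hi
  rw [xiT, dif_pos ⟨i, hmem⟩]
  exact Finset.le_sup' (fun i => max (b i - Δ) 0) hmem

theorem xiT_le {T : Finset (Fin m)} {c : ℝ} (hc : 0 ≤ c)
    (h : ∀ i, (∀ j ∈ T, A i j < b i - Δ) → max (b i - Δ) 0 ≤ c) : xiT A b Δ T ≤ c := by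
  unfold xiT
  split_ifs with hI
  · exact Finset.sup'_le hI _ fun i hi => h i (Finset.mem_filter.mp hi).2
  · exact hc

/-- Conditions (ii) and (iii) are equivalent.  For (iii) ⇒ (ii) at a row `i` with
`b i - Δ > 0`, test (iii) on `T = {j | A i j < b i - Δ}`: then `i ∈ I_T`, so some `x j` with
`j ∉ T`, i.e. with `b i - Δ ≤ A i j`, reaches `b i - Δ`. -/
theorem forall_exists_le_iff_forall_xiT_le {x : Fin m → ℝ} [NeZero m]
    (hA : ∀ i j, 0 ≤ A i j) (hx : ∀ j, 0 ≤ x j) :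
    (∀ i, ∃ j, max (b i - Δ) 0 ≤ A i j ∧ max (b i - Δ) 0 ≤ x j) ↔
      ∀ T : Finset (Fin m), xiT A b Δ T ≤ stmtMaxOn Tᶜ x := by
  constructor
  · intro h T
    refine xiT_le A b Δ (stmtMaxOn_nonneg _ hx) fun i hi => ?_
    obtain ⟨j, hAj, hxj⟩ := h i
    have hjT : j ∈ Tᶜ := Finset.mem_compl.mpr fun hjT =>
      (hi j hjT).not_ge ((le_max_left _ _).trans hAj)
    exact hxj.trans (le_stmtMaxOn x hjT)
  · intro h i
    rcases le_or_gt (b i - Δ) 0 with hbi | hbi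
    · rw [max_eq_right hbi]
      exact ⟨0, hA i 0, hx 0⟩
    · rw [max_eq_left hbi.le]
      by_contra! hfail
      let T := Finset.univ.filter fun j => A i j < b i - Δ
      have hxT : stmtMaxOn Tᶜ x < b i - Δ := stmtMaxOn_lt hbi fun j hj =>
        hfail j (not_lt.mp fun hlt => Finset.mem_compl.mp hj (by simpa [T] using hlt))
      have hxiT : b i - Δ ≤ xiT A b Δ T :=
        (le_max_left _ _).trans (le_xiT A b Δ fun j hj => by simpa [T] using hj)
      exact (h T).not_gt (hxT.trans_le hxiT)

end Xi

theorem stmt16_general {n m : ℕ} [NeZero m] (A : Fin n → Fin m → ℝ)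
    (hA : ∀ i j, A i j ∈ Set.Icc (0:ℝ) 1)
    (b : Fin n → ℝ) (Δ : ℝ)
    (x : Fin m → ℝ) (hx : ∀ j, x j ∈ Set.Icc (0:ℝ) 1) :
    ((∀ i, max (b i - Δ) 0 ≤
        Finset.univ.sup' Finset.univ_nonempty (fun j => min (A i j) (x j))) ↔
      (∀ i, ∃ j, max (b i - Δ) 0 ≤ A i j ∧ max (b i - Δ) 0 ≤ x j)) ∧
    ((∀ i, max (b i - Δ) 0 ≤
        Finset.univ.sup' Finset.univ_nonempty (fun j => min (A i j) (x j))) ↔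
      (∀ T : Finset (Fin m), xiT A b Δ T ≤ stmtMaxOn Tᶜ x)) := by
  have hmaxmin : (∀ i, max (b i - Δ) 0 ≤
        Finset.univ.sup' Finset.univ_nonempty (fun j => min (A i j) (x j))) ↔
      ∀ i, ∃ j, max (b i - Δ) 0 ≤ A i j ∧ max (b i - Δ) 0 ≤ x j :=
    forall_congr' fun i => Finset.le_univ_sup'_min_iff (A i) x _
  exact ⟨hmaxmin, hmaxmin.trans <|
    forall_exists_le_iff_forall_xiT_le A b Δ (fun i j => (hA i j).1) fun j => (hx j).1⟩

theorem stmt16 {n m : ℕ} [NeZero m] (A : Fin n → Fin m → ℝ)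
    (hA : ∀ i j, A i j ∈ Set.Icc (0:ℝ) 1)
    (b : Fin n → ℝ) (hb : ∀ i, b i ∈ Set.Icc (0:ℝ) 1)
    (Δ : ℝ) (hΔ : Δ ∈ Set.Icc (0:ℝ) 1)
    (x : Fin m → ℝ) (hx : ∀ j, x j ∈ Set.Icc (0:ℝ) 1) :
    ((∀ i, max (b i - Δ) 0 ≤
        Finset.univ.sup' Finset.univ_nonempty (fun j => min (A i j) (x j))) ↔
      (∀ i, ∃ j, max (b i - Δ) 0 ≤ A i j ∧ max (b i - Δ) 0 ≤ x j)) ∧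
    ((∀ i, max (b i - Δ) 0 ≤
        Finset.univ.sup' Finset.univ_nonempty (fun j => min (A i j) (x j))) ↔
      (∀ T : Finset (Fin m), xiT A b Δ T ≤ stmtMaxOn Tᶜ x)) :=
  stmt16_general A hA b Δ x hx
end
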